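/- arXiv:1808.00923 — 2 statements merged into one kernel-verified Lean document; each statement's English description precedes it below -/
import Mathlib

section
/- Let X be a finite set of points in a real convex space and consider S = convHull(X) with X = {d₁,…,dₙ}. If convHull{d₁,…,dₙ} = convHull{e₁,…,eₘ}, then in any convex semilattice A, for any affine map g from the ambient convex space to A's underlying convex structure (i.e., g preserving convex combinations), we have g(d₁) ⊕ ⋯ ⊕ g(dₙ) = g(e₁) ⊕ ⋯ ⊕ g(eₘ). -/
/-- A convex semilattice. -/
structure ConvexSemilattice (A : Type*) where
  op : A → A → A
  pc : ℝ → A → A → A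
  op_assoc : ∀ x y z, op (op x y) z = op x (op y z)
  op_comm : ∀ x y, op x y = op y x
  op_idem : ∀ x, op x x = x
  pc_assoc : ∀ p q x y z, p ∈ Set.Ioo (0:ℝ) 1 → q ∈ Set.Ioo (0:ℝ) 1 →
      pc p (pc q x y) z = pc (p * q) x (pc (p * (1 - q) / (1 - p * q)) y z)
  pc_comm : ∀ p x y, p ∈ Set.Ioo (0:ℝ) 1 → pc p x y = pc (1 - p) y x
  pc_idem : ∀ p x, p ∈ Set.Ioo (0:ℝ) 1 → pc p x x = x
  distrib : ∀ p x y z, p ∈ Set.Ioo (0:ℝ) 1 →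
      pc p (op x y) z = op (pc p x z) (pc p y z)

/-- The iterated semilattice operation `a₁ ⊕ ⋯ ⊕ aₙ`. -/
def ConvexSemilattice.bigOp {A : Type*} (L : ConvexSemilattice A) :
    (n : ℕ) → (Fin (n + 1) → A) → A
  | 0, a => a 0
  | n + 1, a => L.op (L.bigOp n (fun j => a j.castSucc)) (a (Fin.last (n + 1)))

section Aux
variable {A : Type*} (L : ConvexSemilattice A)

lemma one_sub_mem {p : ℝ} (hp : p ∈ Set.Ioo (0:ℝ) 1) : (1 - p) ∈ Set.Ioo (0:ℝ) 1 :=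
  ⟨by linarith [hp.2], by linarith [hp.1]⟩

lemma ConvexSemilattice.bigOp_succ (n : ℕ) (a : Fin (n + 2) → A) :
    L.bigOp (n + 1) a = L.op (L.bigOp n (fun j => a j.castSucc)) (a (Fin.last (n + 1))) := rfl

lemma ConvexSemilattice.op_le {c u v : A} (hu : L.op c u = c) (hv : L.op c v = c) :
    L.op c (L.op u v) = c := by
  rw [← L.op_assoc, hu, hv]

lemma ConvexSemilattice.pc_le {p : ℝ} (hp : p ∈ Set.Ioo (0:ℝ) 1) {c u v : A}
    (hu : L.op c u = c) (hv : L.op c v = c) : L.op c (L.pc p u v) = c := by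
  have hp' := one_sub_mem hp
  have start : c = L.pc p (L.op c u) (L.op c v) := by rw [hu, hv, L.pc_idem p c hp]
  have key : c = L.op (L.op c (L.pc p c v)) (L.op (L.pc p u c) (L.pc p u v)) := by
    conv_lhs => rw [start]
    rw [L.distrib p c u (L.op c v) hp]
    congr 1
    · rw [L.pc_comm p c (L.op c v) hp, L.distrib (1-p) c v c hp',
        L.pc_idem (1-p) c hp', ← L.pc_comm p c v hp]
    · rw [L.pc_comm p u (L.op c v) hp, L.distrib (1-p) c v u hp',
        ← L.pc_comm p u c hp, ← L.pc_comm p u v hp]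
  conv_lhs => rw [key]
  rw [L.op_assoc, L.op_assoc (L.pc p u c), L.op_idem]
  exact key.symm

/-- Each component is absorbed by the big join. -/
lemma ConvexSemilattice.bigOp_absorb : ∀ (n : ℕ) (a : Fin (n + 1) → A) (i : Fin (n + 1)),
    L.op (L.bigOp n a) (a i) = L.bigOp n a := by
  intro n
  induction n with
  | zero => intro a i; rw [Fin.eq_zero i]; exact L.op_idem _
  | succ n ih =>
    intro a i
    rw [L.bigOp_succ n a]
    refine Fin.lastCases ?_ (fun j => ?_) i
    · rw [L.op_assoc, L.op_idem]
    · rw [L.op_assoc, L.op_comm (a (Fin.last (n+1))), ← L.op_assoc,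
        ih (fun j => a j.castSucc) j]

lemma ConvexSemilattice.bigOp_le {c : A} : ∀ (n : ℕ) (a : Fin (n + 1) → A),
    (∀ i, L.op c (a i) = c) → L.op c (L.bigOp n a) = c := by
  intro n
  induction n with
  | zero => intro a ha; exact ha 0
  | succ n ih =>
    intro a ha
    rw [L.bigOp_succ n a]
    exact L.op_le (ih _ (fun j => ha j.castSucc)) (ha (Fin.last (n+1)))

end Aux

/-- If two finite sets of points have the same convex hull, then for any
affine map `g` into a convex semilattice, the `⊕`-combinations of the images
of the generators agree: `g(d₁) ⊕ ⋯ ⊕ g(dₙ) = g(e₁) ⊕ ⋯ ⊕ g(eₘ)`. -/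
theorem bigOp_eq_of_convexHull_eq
    {E A : Type*} [AddCommGroup E] [Module ℝ E]
    (L : ConvexSemilattice A) (g : E → A)
    (hg : ∀ p ∈ Set.Ioo (0:ℝ) 1, ∀ x y : E,
      g (p • x + (1 - p) • y) = L.pc p (g x) (g y))
    (n m : ℕ) (d : Fin (n + 1) → E) (e : Fin (m + 1) → E)
    (h : convexHull ℝ (Set.range d) = convexHull ℝ (Set.range e)) :
    L.bigOp n (fun i => g (d i)) = L.bigOp m (fun j => g (e j)) := by
  classical
  set B := L.bigOp n (fun i => g (d i)) with hB
  set C := L.bigOp m (fun j => g (e j)) with hC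
  have convT : ∀ c : A, Convex ℝ {x : E | L.op c (g x) = c} := by
    intro c x hx y hy a b ha hb hab
    rcases eq_or_lt_of_le ha with ha0 | ha0
    · have hb1 : b = 1 := by linarith
      simpa [← ha0, hb1] using hy
    rcases eq_or_lt_of_le hb with hb0 | hb0
    · have ha1 : a = 1 := by linarith
      simpa [← hb0, ha1] using hx
    have ha1 : a ∈ Set.Ioo (0:ℝ) 1 := ⟨ha0, by linarith⟩
    have hb' : b = 1 - a := by linarith
    show L.op c (g (a • x + b • y)) = c
    rw [hb', hg a ha1 x y]
    exact L.pc_le ha1 hx hy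
  have hd : ∀ x ∈ convexHull ℝ (Set.range d), L.op B (g x) = B := by
    intro x hx
    refine convexHull_min ?_ (convT B) hx
    rintro _ ⟨i, rfl⟩
    exact L.bigOp_absorb n (fun i => g (d i)) i
  have he : ∀ x ∈ convexHull ℝ (Set.range e), L.op C (g x) = C := by
    intro x hx
    refine convexHull_min ?_ (convT C) hx
    rintro _ ⟨j, rfl⟩
    exact L.bigOp_absorb m (fun j => g (e j)) j
  have h1 : L.op B C = B :=
    L.bigOp_le m _ (fun j => hd (e j) (h ▸ subset_convexHull ℝ _ ⟨j, rfl⟩))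
  have h2 : L.op C B = C :=
    L.bigOp_le n _ (fun i => he (d i) (h.symm ▸ subset_convexHull ℝ _ ⟨i, rfl⟩))
  rw [← h1, L.op_comm, h2]
end

section
/- The quotient of the interval algebra 𝓘 (with ⊕ = minmax, +_p componentwise, distinguished element [0,0]) by the bottom axiom x ⊕ ⊥ = x, interpreted on intervals as S ⊕ [0,0] = S, is isomorphic as a pointed convex semilattice to ([0,1], max, +_p, 0) via [x,y] ↦ y. -/
/-- Closed subintervals `[x,y]` of `[0,1]`, as pairs with `0 ≤ x ≤ y ≤ 1`. -/
def II : Type := {q : ℝ × ℝ // 0 ≤ q.1 ∧ q.1 ≤ q.2 ∧ q.2 ≤ 1}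

/-- `[x₁,y₁] ⊕ [x₂,y₂] = [min(x₁,x₂), max(y₁,y₂)]`. -/
noncomputable def iop (s t : II) : II :=
  ⟨(min s.1.1 t.1.1, max s.1.2 t.1.2),
    le_min s.2.1 t.2.1,
    min_le_of_left_le (le_trans s.2.2.1 (le_max_left _ _)),
    max_le s.2.2.2 t.2.2.2⟩

/-- `[x₁,y₁] +_p [x₂,y₂] = [p·x₁+(1-p)·x₂, p·y₁+(1-p)·y₂]`. -/
noncomputable def ipc (p : ℝ) (s t : II) : II :=
  if h : p ∈ Set.Icc (0:ℝ) 1 then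
    ⟨(p * s.1.1 + (1 - p) * t.1.1, p * s.1.2 + (1 - p) * t.1.2), by
      obtain ⟨h0, h1⟩ := h
      refine ⟨?_, ?_, ?_⟩ <;>
        · simp only
          nlinarith [s.2.1, t.2.1, s.2.2.1, t.2.2.1, s.2.2.2, t.2.2.2]⟩
  else s

/-- The interval `[0,0]`. -/
noncomputable def izero : II := ⟨(0, 0), by norm_num⟩

/-- The smallest congruence on the interval algebra containing all instances
of the bottom axiom `S ⊕ [0,0] = S`. -/
inductive BotCong : II → II → Prop
  | base (s : II) : BotCong (iop s izero) s
  | refl (s : II) : BotCong s s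
  | symm {s t : II} : BotCong s t → BotCong t s
  | trans {s t u : II} : BotCong s t → BotCong t u → BotCong s u
  | op_congr {s s' t t' : II} : BotCong s s' → BotCong t t' →
      BotCong (iop s t) (iop s' t')
  | pc_congr (p : ℝ) {s s' t t' : II} : p ∈ Set.Ioo (0:ℝ) 1 →
      BotCong s s' → BotCong t t' → BotCong (ipc p s t) (ipc p s' t')

lemma II_upper_nonneg (s : II) : 0 ≤ s.1.2 := le_trans s.2.1 s.2.2.1

lemma ipc_snd (p : ℝ) (hp : p ∈ Set.Ioo (0:ℝ) 1) (s t : II) :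
    (ipc p s t).1.2 = p * s.1.2 + (1 - p) * t.1.2 := by
  have h : p ∈ Set.Icc (0:ℝ) 1 := ⟨le_of_lt hp.1, le_of_lt hp.2⟩
  simp [ipc, h]

lemma botCong_upper {s t : II} (h : BotCong s t) : s.1.2 = t.1.2 := by
  induction h with
  | base s => simp [iop, izero, max_eq_left (II_upper_nonneg s)]
  | refl s => rfl
  | symm _ ih => exact ih.symm
  | trans _ _ ih1 ih2 => exact ih1.trans ih2
  | op_congr _ _ ih1 ih2 => simp [iop, ih1, ih2]
  | pc_congr p hp _ _ ih1 ih2 => rw [ipc_snd p hp, ipc_snd p hp, ih1, ih2]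

lemma iop_izero (s : II) : iop s izero = ⟨(0, s.1.2), le_refl 0, II_upper_nonneg s, s.2.2.2⟩ := by
  apply Subtype.ext
  simp [iop, izero, min_eq_right s.2.1, max_eq_left (II_upper_nonneg s)]

/-- The quotient of the interval algebra `𝓘` (with `⊕ = minmax`, `+_p`
componentwise, point `[0,0]`) by the bottom axiom `S ⊕ [0,0] = S` is
isomorphic, via `[x,y] ↦ y`, to the pointed convex semilattice
`([0,1], max, +_p, 0)`: the upper-endpoint map identifies exactly the
congruent intervals, is surjective onto `[0,1]`, and turns the operations
into `max`, convex combination, and `0`. -/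
theorem interval_bot_quotient_iso_max :
    (∀ s t : II, BotCong s t ↔ s.1.2 = t.1.2) ∧
    (∀ x ∈ Set.Icc (0:ℝ) 1, ∃ s : II, s.1.2 = x) ∧
    (∀ s t : II, (iop s t).1.2 = max s.1.2 t.1.2) ∧
    (∀ p ∈ Set.Ioo (0:ℝ) 1, ∀ s t : II,
      (ipc p s t).1.2 = p * s.1.2 + (1 - p) * t.1.2) ∧
    izero.1.2 = 0 := by
  refine ⟨?_, ?_, ?_, ?_, rfl⟩
  · intro s t
    constructor
    · exact botCong_upper
    · intro h
      have e : iop s izero = iop t izero := Subtype.ext (by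
        simp [iop, izero, min_eq_right s.2.1, min_eq_right t.2.1,
          max_eq_left (II_upper_nonneg s), max_eq_left (II_upper_nonneg t), h])
      exact BotCong.trans (BotCong.symm (BotCong.base s)) (e ▸ BotCong.base t)
  · intro x hx
    exact ⟨⟨(x, x), hx.1, le_refl x, hx.2⟩, rfl⟩
  · intro s t; rfl
  · exact fun p hp s t => ipc_snd p hp s t
end
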